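/- Let T be a rooted tree with m leaves labeled by vectors y₁,…,y_m ∈ {0,1}ⁿ, internal labels z_v = ⋁_{ℓ under v} y_ℓ, and cost c(T) = n + Σ_v ‖z_v‖₁ deg(v). Then for any tree T: c(T) ≥ n + Σ_{j=1}^m ‖y_j‖₁. Consequently, a complete ternary tree T₃ of depth ⌈log₃ m⌉ with the leaves assigned arbitrarily satisfies c(T₃) ≤ n + 3⌈log₃ m⌉ Σⱼ ‖yⱼ‖₁ ≤ (3 log₂ m / log₂ 3) · min_T c(T) for m ≥ 2. -/

import Mathlib

/-- A rooted tree with leaves labeled by `α`. -/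
inductive RTree (α : Type) where
  | leaf : α → RTree α
  | node : List (RTree α) → RTree α

namespace RTree

/-- The list of leaf labels of a tree. -/
def leaves {α : Type} : RTree α → List α
  | .leaf a => [a]
  | .node ts => (ts.attach.map (fun ⟨t, _⟩ => t.leaves)).flatten

/-- Depth of the tree: maximum number of edges on a root-to-leaf path. -/
def depth {α : Type} : RTree α → ℕ
  | .leaf _ => 0
  | .node ts => 1 + (ts.attach.map (fun ⟨t, _⟩ => t.depth)).foldr max 0

/-- Maximum degree (number of children) over all nodes. -/
def maxdeg {α : Type} : RTree α → ℕ
  | .leaf _ => 0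
  | .node ts => max ts.length ((ts.attach.map (fun ⟨t, _⟩ => t.maxdeg)).foldr max 0)

end RTree

/-- Hamming weight of a binary vector. -/
def hw {n : ℕ} (z : Fin n → Bool) : ℕ := (Finset.univ.filter (fun i => z i = true)).card

/-- Coordinatewise OR of a list of binary vectors. -/
def orv {n : ℕ} (ys : List (Fin n → Bool)) : Fin n → Bool := fun i => ys.any (fun y => y i)

/-- `∑_{v ∈ V(T)} ‖z_v‖₁ · deg(v)`, where `z_v` is the OR of the leaf labels below `v`
and `deg(v)` the number of children of `v` (0 for leaves). -/
def RTree.cost {n : ℕ} : RTree (Fin n → Bool) → ℕ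
  | .leaf _ => 0
  | .node ts => hw (orv (RTree.leaves (.node ts))) * ts.length
      + (ts.attach.map (fun ⟨t, _⟩ => t.cost)).sum

/-!
Lower bound: a node `v` with `k` children pays `k ‖z_v‖₁`, and `‖z_v‖₁` dominates the root weight
of each child. So every node pays for the root weights of its children, and unrolling from the
root, every leaf weight `‖y_j‖₁` is paid on the edge above it.

Upper bound: cut the leaf list into thirds recursively, to depth `d = ⌈log₃ m⌉`. The root pays at
most `3 ‖z_root‖₁ ≤ 3 n`, and each of the `d - 1` lower levels at most `3 ∑ⱼ ‖y_j‖₁`, since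
`‖·‖₁` is subadditive under `∨`. Since `3 log₃ m ≥ 3 (d - 1)`, which is at least `4` once
`m ≥ 10`, the lower bound gives the ratio; for `m ≤ 9` explicit rational lower bounds of
`3 log₃ m` are used.
-/

lemma hw_le {n : ℕ} (z : Fin n → Bool) : hw z ≤ n :=
  (Finset.card_filter_le _ _).trans_eq (Finset.card_fin n)

lemma hw_orv_mono {n : ℕ} {l₁ l₂ : List (Fin n → Bool)} (h : l₁ ⊆ l₂) :
    hw (orv l₁) ≤ hw (orv l₂) := by
  refine Finset.card_le_card fun i => ?_
  simp only [Finset.mem_filter, Finset.mem_univ, true_and, orv, List.any_eq_true]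
  exact fun ⟨y, hy, hyi⟩ => ⟨y, h hy, hyi⟩

lemma hw_orv_cons {n : ℕ} (y : Fin n → Bool) (l : List (Fin n → Bool)) :
    hw (orv (y :: l)) ≤ hw y + hw (orv l) := by
  have hsplit : Finset.univ.filter (fun i => orv (y :: l) i = true) =
      Finset.univ.filter (fun i => y i = true) ∪
        Finset.univ.filter (fun i => orv l i = true) := by
    rw [← Finset.filter_or]
    simp [orv]
  exact (congrArg Finset.card hsplit).trans_le (Finset.card_union_le _ _)

lemma hw_orv_le_sum {n : ℕ} (l : List (Fin n → Bool)) : hw (orv l) ≤ (l.map hw).sum := by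
  induction l with
  | nil => simp [hw, orv]
  | cons y l ih => simpa using (hw_orv_cons y l).trans (Nat.add_le_add_left ih _)

lemma le_three_mul_logb_div_of_pow_le {m a b : ℕ} (hb : 0 < b) (h : 3 ^ a ≤ m ^ (3 * b)) :
    (a / b : ℝ) ≤ 3 * Real.logb 2 m / Real.logb 2 3 := by
  have hm : 0 < m := Nat.pos_of_ne_zero <| by
    rintro rfl
    simp [zero_pow (by omega : 3 * b ≠ 0)] at h
  have hlog : (a : ℝ) * Real.log 3 ≤ 3 * b * Real.log m := by
    have := Real.log_le_log (by positivity)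
      (show (3 : ℝ) ^ a ≤ (m : ℝ) ^ (3 * b) by exact_mod_cast h)
    rwa [Real.log_pow, Real.log_pow, Nat.cast_mul, Nat.cast_ofNat] at this
  have h3 : 0 < Real.log 3 := Real.log_pos (by norm_num)
  have h2 : 0 < Real.log 2 := Real.log_pos (by norm_num)
  rw [Real.logb, Real.logb, mul_div_assoc', div_div_div_cancel_right₀ h2.ne',
    div_le_div_iff₀ (by exact_mod_cast hb) h3]
  linarith

lemma cast_le_mul_of_mul_le {x y a b : ℕ} {ρ : ℝ} (hb : 0 < b) (h : b * x ≤ a * y)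
    (hρ : (a / b : ℝ) ≤ ρ) : (x : ℝ) ≤ ρ * y :=
  calc (x : ℝ) ≤ a / b * y := by
        rw [div_mul_eq_mul_div, le_div_iff₀ (by exact_mod_cast hb), mul_comm]
        exact_mod_cast h
    _ ≤ ρ * y := by gcongr

namespace RTree

section Generic

variable {α : Type}

@[simp]
lemma leaves_node (ts : List (RTree α)) : (node ts).leaves = (ts.map leaves).flatten := by
  simp [leaves]

@[simp]
lemma depth_node (ts : List (RTree α)) : (node ts).depth = 1 + (ts.map depth).foldr max 0 := by
  simp [depth]

@[simp]
lemma maxdeg_node (ts : List (RTree α)) :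
    (node ts).maxdeg = max ts.length ((ts.map maxdeg).foldr max 0) := by
  simp [maxdeg]

lemma depth_node_le {ts : List (RTree α)} {d : ℕ} (h : ∀ t ∈ ts, t.depth ≤ d) :
    (node ts).depth ≤ d + 1 := by
  have : (ts.map depth).foldr max 0 ≤ d := List.max_le_of_forall_le _ _ (by simpa using h)
  simp only [depth_node]
  omega

lemma maxdeg_node_le {ts : List (RTree α)} {k : ℕ} (hlen : ts.length ≤ k)
    (h : ∀ t ∈ ts, t.maxdeg ≤ k) : (node ts).maxdeg ≤ k := by
  simpa [hlen] using List.max_le_of_forall_le (ts.map maxdeg) k (by simpa using h)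

lemma leaves_subset_of_mem {ts : List (RTree α)} {t : RTree α} (ht : t ∈ ts) :
    t.leaves ⊆ (node ts).leaves := fun _ ha =>
  leaves_node ts ▸ List.mem_flatten.2 ⟨_, List.mem_map_of_mem ht, ha⟩

end Generic

variable {n : ℕ}

lemma cost_node (ts : List (RTree (Fin n → Bool))) :
    (node ts).cost = hw (orv (node ts).leaves) * ts.length + (ts.map cost).sum := by
  rw [cost]
  simp

lemma sum_hw_leaves_node (ts : List (RTree (Fin n → Bool))) :
    ((node ts).leaves.map hw).sum = (ts.map fun t => (t.leaves.map hw).sum).sum := by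
  simp [List.map_flatten, List.sum_flatten, Function.comp_def]

lemma sum_hw_leaves_node_le_cost {ts : List (RTree (Fin n → Bool))}
    (h : ∀ t ∈ ts, (t.leaves.map hw).sum ≤ t.cost + hw (orv t.leaves)) :
    ((node ts).leaves.map hw).sum ≤ (node ts).cost :=
  calc ((node ts).leaves.map hw).sum = (ts.map fun t => (t.leaves.map hw).sum).sum :=
        sum_hw_leaves_node ts
    _ ≤ (ts.map fun t => t.cost + hw (orv t.leaves)).sum := List.sum_le_sum h
    _ = (ts.map cost).sum + (ts.map fun t => hw (orv t.leaves)).sum := List.sum_map_add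
    _ ≤ (ts.map cost).sum + (ts.map fun t => hw (orv t.leaves)).length •
          hw (orv (node ts).leaves) := by
        refine Nat.add_le_add_left (List.sum_le_card_nsmul _ _ ?_) _
        simp only [List.mem_map]
        rintro _ ⟨t, ht, rfl⟩
        exact hw_orv_mono (leaves_subset_of_mem ht)
    _ = (node ts).cost := by rw [cost_node, List.length_map, smul_eq_mul]; ring

lemma sum_hw_leaves_le_cost_add_hw_orv :
    ∀ t : RTree (Fin n → Bool), (t.leaves.map hw).sum ≤ t.cost + hw (orv t.leaves)
  | leaf a => by simp [leaves, cost, hw, orv]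
  | node ts => (sum_hw_leaves_node_le_cost fun t _ =>
      sum_hw_leaves_le_cost_add_hw_orv t).trans (Nat.le_add_right _ _)

lemma sum_hw_leaves_le_cost {t : RTree (Fin n → Bool)} (ht : 2 ≤ t.leaves.length) :
    (t.leaves.map hw).sum ≤ t.cost := by
  cases t with
  | leaf a => simp [leaves] at ht
  | node ts => exact sum_hw_leaves_node_le_cost fun t _ => sum_hw_leaves_le_cost_add_hw_orv t

lemma cost_node_le {ts : List (RTree (Fin n → Bool))} {k c : ℕ} (hlen : ts.length ≤ k)
    (h : ∀ t ∈ ts, t.cost ≤ c * (t.leaves.map hw).sum) :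
    (node ts).cost ≤ k * hw (orv (node ts).leaves) + c * ((node ts).leaves.map hw).sum := by
  rw [cost_node, sum_hw_leaves_node, ← List.sum_map_mul_left, mul_comm]
  gcongr
  exact List.sum_le_sum h

section Ternary

variable {α : Type}

def thirds (k : ℕ) (l : List α) : List (List α) :=
  [l.take k, (l.drop k).take k, (l.drop k).drop k].filter (!·.isEmpty)

lemma flatten_thirds (k : ℕ) (l : List α) : (thirds k l).flatten = l := by
  simp [thirds, List.flatten_filter_not_isEmpty]

lemma length_thirds_le (k : ℕ) (l : List α) : (thirds k l).length ≤ 3 :=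
  List.length_filter_le _ _

lemma ne_nil_of_mem_thirds {k : ℕ} {l c : List α} (hc : c ∈ thirds k l) : c ≠ [] := by
  simpa [thirds] using (List.of_mem_filter hc)

lemma length_le_of_mem_thirds {k : ℕ} {l c : List α} (hl : l.length ≤ 3 * k)
    (hc : c ∈ thirds k l) : c.length ≤ k := by
  simp only [thirds, List.mem_filter, List.mem_cons, List.not_mem_nil, or_false] at hc
  rcases hc.1 with rfl | rfl | rfl <;> simp; omega

def ternary : ℕ → List α → RTree α
  | 0, [a] => leaf a
  | 0, l => node (l.map leaf)
  | d + 1, l => node ((thirds (3 ^ d) l).map (ternary d))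

lemma ternary_succ (d : ℕ) (l : List α) :
    ternary (d + 1) l = node ((thirds (3 ^ d) l).map (ternary d)) := rfl

lemma leaves_ternary (d : ℕ) (l : List α) : (ternary d l).leaves = l := by
  induction d generalizing l with
  | zero =>
    rcases l with _ | ⟨a, _ | ⟨b, l⟩⟩ <;>
      simp [ternary, leaves, Function.comp_def, ← List.flatMap_def]
  | succ d ih => simp [ternary_succ, Function.comp_def, ih, flatten_thirds]

lemma length_le_of_mem_thirds_pow {d : ℕ} {l c : List α} (hl : l.length ≤ 3 ^ (d + 1))
    (hc : c ∈ thirds (3 ^ d) l) : c.length ≤ 3 ^ d :=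
  length_le_of_mem_thirds (pow_succ' 3 d ▸ hl) hc

lemma maxdeg_ternary_le {d : ℕ} {l : List α} (hl : l.length ≤ 3 ^ d) :
    (ternary d l).maxdeg ≤ 3 := by
  induction d generalizing l with
  | zero => rcases l with _ | ⟨a, _ | ⟨b, l⟩⟩ <;> simp_all [ternary, maxdeg]
  | succ d ih =>
    rw [ternary_succ]
    refine maxdeg_node_le ((List.length_map _).trans_le (length_thirds_le _ _)) ?_
    simp only [List.mem_map]
    rintro _ ⟨c, hc, rfl⟩
    exact ih (length_le_of_mem_thirds_pow hl hc)

lemma depth_ternary_le {d : ℕ} {l : List α} (hne : l ≠ []) (hl : l.length ≤ 3 ^ d) :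
    (ternary d l).depth ≤ d := by
  induction d generalizing l with
  | zero => rcases l with _ | ⟨a, _ | ⟨b, l⟩⟩ <;> simp_all [ternary, depth]
  | succ d ih =>
    rw [ternary_succ]
    refine depth_node_le ?_
    simp only [List.mem_map]
    rintro _ ⟨c, hc, rfl⟩
    exact ih (ne_nil_of_mem_thirds hc) (length_le_of_mem_thirds_pow hl hc)

end Ternary

lemma cost_ternary_succ_le_of {d : ℕ} {l : List (Fin n → Bool)} (hl : l.length ≤ 3 ^ (d + 1))
    (h : ∀ c : List (Fin n → Bool), c ≠ [] → c.length ≤ 3 ^ d →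
      (ternary d c).cost ≤ 3 * d * (c.map hw).sum) :
    (ternary (d + 1) l).cost ≤ 3 * hw (orv l) + 3 * d * (l.map hw).sum := by
  have hchildren : ∀ t ∈ (thirds (3 ^ d) l).map (ternary d),
      t.cost ≤ 3 * d * (t.leaves.map hw).sum := by
    simp only [List.mem_map]
    rintro _ ⟨c, hc, rfl⟩
    rw [leaves_ternary]
    exact h c (ne_nil_of_mem_thirds hc) (length_le_of_mem_thirds_pow hl hc)
  simpa only [← ternary_succ, leaves_ternary] using
    cost_node_le ((List.length_map _).trans_le (length_thirds_le _ _)) hchildren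

lemma cost_ternary_succ_le {d : ℕ} {l : List (Fin n → Bool)} (hl : l.length ≤ 3 ^ (d + 1)) :
    (ternary (d + 1) l).cost ≤ 3 * hw (orv l) + 3 * d * (l.map hw).sum := by
  induction d generalizing l with
  | zero =>
    refine cost_ternary_succ_le_of hl fun c hne hc => ?_
    rcases c with _ | ⟨a, _ | ⟨b, c⟩⟩ <;> simp_all [ternary, cost]
  | succ d ih =>
    refine cost_ternary_succ_le_of hl fun c _ hc => (ih hc).trans ?_
    have := hw_orv_le_sum c
    nlinarith

lemma cost_ternary_one_pair (a b : Fin n → Bool) :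
    (ternary 1 [a, b]).cost = 2 * hw (orv [a, b]) := by
  rw [show ternary 1 [a, b] = node [leaf a, leaf b] from rfl, cost_node]
  simp [cost, leaves, mul_comm]

lemma add_cost_ternary_le {d C : ℕ} {l : List (Fin n → Bool)} (hlo : 3 ^ d < l.length)
    (hhi : l.length ≤ 3 ^ (d + 1)) (hC : (l.map hw).sum ≤ C) :
    (n : ℝ) + (ternary (d + 1) l).cost ≤
      3 * Real.logb 2 l.length / Real.logb 2 3 * ((n : ℝ) + C) := by
  have hn := hw_le (orv l)
  have hS := hw_orv_le_sum l
  have hcost := cost_ternary_succ_le hhi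
  push_cast [← Nat.cast_add]
  match d, hlo with
  | 0, hlo =>
    rw [zero_add] at hcost ⊢
    obtain hm | hm : l.length = 2 ∨ l.length = 3 := by omega
    · obtain ⟨a, b, rfl⟩ := List.length_eq_two.1 hm
      have h2 := cost_ternary_one_pair a b
      refine cast_le_mul_of_mul_le (a := 9) (b := 5) (by norm_num) (by omega) ?_
      exact le_three_mul_logb_div_of_pow_le (by norm_num) (by norm_num)
    · refine cast_le_mul_of_mul_le (a := 3) (b := 1) (by norm_num) (by omega) ?_
      exact le_three_mul_logb_div_of_pow_le (by norm_num) (by rw [hm])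
  | 1, hlo =>
    refine cast_le_mul_of_mul_le (a := 15) (b := 4) (by norm_num) (by omega) ?_
    exact le_three_mul_logb_div_of_pow_le (by norm_num)
      ((show 3 ^ 15 ≤ 4 ^ 12 by norm_num).trans (Nat.pow_le_pow_left hlo 12))
  | e + 2, hlo =>
    refine cast_le_mul_of_mul_le (a := 3 * (e + 2)) (b := 1) (by norm_num) (by nlinarith) ?_
    refine le_three_mul_logb_div_of_pow_le (by norm_num) ?_
    rw [mul_comm, pow_mul]
    exact Nat.pow_le_pow_left hlo.le 3

end RTree

open RTree in
/-- Lower bound `c(T) ≥ n + ∑ⱼ ‖yⱼ‖₁` for every tree on the given `m ≥ 2` leaf labels,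
and a complete ternary tree `T₃` (degrees ≤ 3, depth ≤ ⌈log₃ m⌉) achieves
`c(T₃) ≤ n + 3⌈log₃ m⌉ ∑ⱼ ‖yⱼ‖₁ ≤ (3·log₂ m / log₂ 3)·min_T c(T)`. -/
theorem stmt_11 (n : ℕ) (ys : List (Fin n → Bool)) (hm : 2 ≤ ys.length) :
    (∀ t : RTree (Fin n → Bool), t.leaves.Perm ys →
        n + (ys.map hw).sum ≤ n + t.cost) ∧
    ∃ t₃ : RTree (Fin n → Bool), t₃.leaves.Perm ys ∧ t₃.maxdeg ≤ 3 ∧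
        t₃.depth ≤ Nat.clog 3 ys.length ∧
        n + t₃.cost ≤ n + 3 * Nat.clog 3 ys.length * (ys.map hw).sum ∧
        ∀ t : RTree (Fin n → Bool), t.leaves.Perm ys →
          ((n : ℝ) + t₃.cost) ≤
            (3 * Real.logb 2 ys.length / Real.logb 2 3) * ((n : ℝ) + t.cost) := by
  have hlower : ∀ t : RTree (Fin n → Bool), t.leaves.Perm ys → (ys.map hw).sum ≤ t.cost :=
    fun t ht => (ht.map hw).sum_eq ▸ sum_hw_leaves_le_cost (ht.length_eq ▸ hm)
  obtain ⟨d, hd⟩ := Nat.exists_eq_add_one.2 (Nat.clog_pos (b := 3) (by norm_num) hm)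
  have hhi : ys.length ≤ 3 ^ (d + 1) := hd ▸ Nat.le_pow_clog (by norm_num) _
  have hlo : 3 ^ d < ys.length := by
    simpa [hd] using Nat.pow_pred_clog_lt_self (b := 3) (by norm_num) hm
  refine ⟨fun t ht => Nat.add_le_add_left (hlower t ht) n, ternary (d + 1) ys,
    by rw [leaves_ternary], maxdeg_ternary_le hhi,
    (depth_ternary_le (List.ne_nil_of_length_pos (by omega)) hhi).trans_eq hd.symm, ?_,
    fun t ht => add_cost_ternary_le hlo hhi (hlower t ht)⟩
  have := cost_ternary_succ_le hhi
  have := hw_orv_le_sum ys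
  rw [hd]
  nlinarith
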